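/- Let $G$ be a locally compact second countable group with Haar measure $m_G$, $\Gamma$ a discrete subgroup, and $\mathcal{O}$ a symmetric neighbourhood of the identity. For a bounded measurable set $B \subset G$, define $B^+ = \mathcal{O} B \mathcal{O}$ and $B^- = \bigcap_{u,v \in \mathcal{O}} u B v$. Let $\chi = \chi_{\mathcal{O}}/m_G(\mathcal{O})$ and $\phi(g\Gamma) = \sum_{\gamma \in \Gamma} \chi(g\gamma)$. Then for every $h \in \mathcal{O}$, $$\int_{B^-} \phi(g^{-1}h\Gamma)\, dm_G(g) \le |B \cap \Gamma| \le \int_{B^+} \phi(g^{-1}h\Gamma)\, dm_G(g).$$ -/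

import Mathlib

/-!
Since `O = O⁻¹`, the term `χ(g⁻¹hγ)` is `m_G(O)⁻¹` times the indicator of `g ∈ hγO`, so by
Tonelli `∫_S φ(g⁻¹h) dm_G(g) = m_G(O)⁻¹ ∑_{γ ∈ Γ} m_G(hγO ∩ S)`. Every term is at most
`m_G(hγO) = m_G(O)`. As `h ∈ O`, the translate `hγO` meets `B⁻` only if `γ ∈ B`, and lies
inside `B⁺` as soon as `γ ∈ B`; this gives both inequalities. Discreteness of `Γ` and relative
compactness of `O` and `B` keep all the sums finite.
-/

open MeasureTheory Set
open scoped ENNReal Pointwise Topology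

theorem tsum_indicator_one_eq_encard {α ι : Type*} (A : ι → Set α) (x : α) :
    ∑' i, (A i).indicator (1 : α → ℝ≥0∞) x = {i | x ∈ A i}.encard := by
  rw [← ENNReal.tsum_set_one, tsum_subtype {i | x ∈ A i} fun _ => (1 : ℝ≥0∞)]
  rfl

theorem integral_tsum_indicator_one {α ι : Type*} [MeasurableSpace α] [Countable ι]
    {μ : Measure α} {A : ι → Set α} (hA : ∀ i, MeasurableSet (A i))
    (hfin : ∀ x, {i | x ∈ A i}.Finite) :
    ∫ x, ∑' i, (A i).indicator (1 : α → ℝ) x ∂μ = (∑' i, μ (A i)).toReal := by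
  have hmeas : ∀ i, Measurable ((A i).indicator (1 : α → ℝ≥0∞)) := fun i =>
    measurable_one.indicator (hA i)
  have htoReal : ∀ x, ∑' i, (A i).indicator (1 : α → ℝ) x
      = (∑' i, (A i).indicator (1 : α → ℝ≥0∞) x).toReal := by
    intro x
    rw [ENNReal.tsum_toReal_eq fun i => by by_cases hx : x ∈ A i <;> simp [hx]]
    congr with i
    by_cases hx : x ∈ A i <;> simp [hx]
  simp_rw [htoReal]
  rw [integral_toReal (Measurable.tsum hmeas).aemeasurable
      (ae_of_all _ fun x => by simpa [tsum_indicator_one_eq_encard] using (hfin x).encard_lt_top),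
    lintegral_tsum fun i => (hmeas i).aemeasurable]
  simp_rw [lintegral_indicator_one (hA _)]

theorem tsum_measure_inter_le_encard_mul {α ι : Type*} [MeasurableSpace α] {μ : Measure α}
    {A : ι → Set α} {S : Set α} {F : Set ι} {m : ℝ≥0∞} (hA : ∀ i, μ (A i) = m)
    (hF : ∀ i, (A i ∩ S).Nonempty → i ∈ F) :
    ∑' i, μ (A i ∩ S) ≤ F.encard * m := by
  calc ∑' i, μ (A i ∩ S) ≤ ∑' i, F.indicator (fun _ => m) i := by
        refine ENNReal.tsum_le_tsum fun i => ?_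
        by_cases hi : i ∈ F
        · simpa [hi, hA i] using measure_mono (μ := μ) (inter_subset_left (s := A i) (t := S))
        · simp [hi, not_nonempty_iff_eq_empty.mp (mt (hF i) hi)]
    _ = F.encard * m := by rw [← tsum_subtype, ENNReal.tsum_set_const]

theorem encard_mul_le_tsum_measure_inter {α ι : Type*} [MeasurableSpace α] {μ : Measure α}
    {A : ι → Set α} {S : Set α} {F : Set ι} {m : ℝ≥0∞} (hA : ∀ i, μ (A i) = m)
    (hF : ∀ i ∈ F, A i ⊆ S) :
    F.encard * m ≤ ∑' i, μ (A i ∩ S) := by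
  calc F.encard * m = ∑' i : F, μ (A i ∩ S) := by
        rw [← ENNReal.tsum_set_const]
        congr with i
        rw [inter_eq_left.mpr (hF i i.2), hA]
    _ ≤ ∑' i, μ (A i ∩ S) := ENNReal.tsum_comp_le_tsum_of_injective Subtype.val_injective _

section Group

variable {G : Type*} [Group G]

theorem mem_smul_set_iff_inv_mul_mem_of_inv_eq {O : Set G} (hO : O⁻¹ = O) {a g : G} :
    g ∈ a • O ↔ g⁻¹ * a ∈ O := by
  rw [mem_smul_set_iff_inv_smul_mem, smul_eq_mul, ← inv_mem_inv, hO, mul_inv_rev, inv_inv]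

theorem mem_of_smul_inter_iInter_image_nonempty {O B : Set G} {h g : G} (hh : h ∈ O)
    (hne : ((h * g) • O ∩ ⋂ u ∈ O, ⋂ v ∈ O, (fun b => u * b * v) '' B).Nonempty) : g ∈ B := by
  obtain ⟨_, ⟨o, ho, rfl⟩, hmem⟩ := hne
  obtain ⟨b, hb, hbg⟩ := mem_iInter₂.mp (mem_iInter₂.mp hmem h hh) o ho
  simp only [smul_eq_mul, mul_assoc, mul_left_cancel_iff, mul_left_inj] at hbg
  rwa [← hbg]

theorem smul_subset_mul_mul {O B : Set G} {h g : G} (hh : h ∈ O) (hg : g ∈ B) :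
    (h * g) • O ⊆ O * B * O := by
  rintro _ ⟨o, ho, rfl⟩
  exact mul_mem_mul (mul_mem_mul hh hg) ho

theorem Subgroup.encard_preimage_coe (Γ : Subgroup G) (B : Set G) :
    (((↑) : Γ → G) ⁻¹' B).encard = (B ∩ Γ).encard := by
  rw [← Subtype.val_injective.encard_image, image_preimage_eq_inter_range, Subtype.range_coe]

variable [MeasurableSpace G] (μ : Measure G) [μ.IsMulLeftInvariant] (Γ : Subgroup G)
  {O B : Set G} {h : G}

theorem tsum_measure_mul_smul_inter_iInter_image_le (hh : h ∈ O) :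
    ∑' γ : Γ, μ ((h * γ) • O ∩ ⋂ u ∈ O, ⋂ v ∈ O, (fun b => u * b * v) '' B)
      ≤ (B ∩ Γ).encard * μ O := by
  rw [← Γ.encard_preimage_coe]
  exact tsum_measure_inter_le_encard_mul (fun γ => measure_smul μ _ O) fun γ hne =>
    show (γ : G) ∈ B from mem_of_smul_inter_iInter_image_nonempty hh hne

theorem encard_inter_mul_le_tsum_measure_mul_smul_inter_mul_mul (hh : h ∈ O) :
    (B ∩ Γ).encard * μ O ≤ ∑' γ : Γ, μ ((h * γ) • O ∩ (O * B * O)) := by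
  rw [← Γ.encard_preimage_coe]
  exact encard_mul_le_tsum_measure_inter (fun γ => measure_smul μ _ O) fun γ hγ =>
    smul_subset_mul_mul hh hγ

end Group

section DiscreteSubgroup

variable {G : Type*} [Group G] [TopologicalSpace G] [IsTopologicalGroup G]
  {Γ : Subgroup G} {O : Set G}

theorem Subgroup.finite_preimage_coe_of_isCompact (hΓ : DiscreteTopology Γ) {K : Set G}
    (hK : IsCompact K) : (((↑) : Γ → G) ⁻¹' K).Finite := by
  obtain ⟨V, hV, hVΓ⟩ :=
    nhds_inter_eq_singleton_of_mem_discrete (isDiscrete_iff_discreteTopology.mpr hΓ) Γ.one_mem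
  obtain ⟨W, hW, hWW⟩ := exists_nhds_split_inv hV
  have hnhds : ∀ x ∈ K, (· * x⁻¹) ⁻¹' W ∈ 𝓝 x := fun x _ =>
    (continuous_mul_const x⁻¹).continuousAt.preimage_mem_nhds (by simpa using hW)
  obtain ⟨t, -, hKt⟩ := hK.elim_nhds_subcover _ hnhds
  refine (t.finite_toSet.biUnion fun x _ => (?_ : {γ : Γ | (γ : G) * x⁻¹ ∈ W}.Finite)).subset
    fun γ hγ => by simpa using hKt hγ
  -- two points of `Γ` in the same right translate `W x` differ by an element of `V ∩ Γ = {1}`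
  refine Subsingleton.finite fun γ hγ γ' hγ' => ?_
  have hmem : (γ : G) * (γ' : G)⁻¹ ∈ V ∩ (Γ : Set G) :=
    ⟨by simpa [div_eq_mul_inv, mul_assoc] using hWW _ hγ _ hγ', Γ.mul_mem γ.2 (Γ.inv_mem γ'.2)⟩
  rw [hVΓ] at hmem
  exact Subtype.ext (mul_inv_eq_one.mp hmem)

theorem Subgroup.finite_inter_of_isCompact (hΓ : DiscreteTopology Γ) {K : Set G}
    (hK : IsCompact K) : (K ∩ Γ).Finite := by
  simpa [image_preimage_eq_inter_range] using
    (Subgroup.finite_preimage_coe_of_isCompact hΓ hK).image Subtype.val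

theorem finite_setOf_mem_mul_smul (hΓ : DiscreteTopology Γ) (hOsym : O⁻¹ = O)
    (hOcpt : IsCompact (closure O)) (h g : G) : {γ : Γ | g ∈ (h * γ) • O}.Finite := by
  refine (Subgroup.finite_preimage_coe_of_isCompact hΓ (hOcpt.smul (h⁻¹ * g))).subset
    fun γ hγ => smul_set_mono subset_closure (mem_smul_set_iff_inv_smul_mem.mpr ?_)
  simpa [mul_assoc] using (mem_smul_set_iff_inv_mul_mem_of_inv_eq hOsym).mp hγ

variable [MeasurableSpace G]

theorem tsum_measure_mul_smul_inter_ne_top (hΓ : DiscreteTopology Γ)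
    (hOcpt : IsCompact (closure O)) {S : Set G} (hScpt : IsCompact (closure S))
    (μ : Measure G) [μ.IsMulLeftInvariant] (hO : μ O ≠ ⊤) (h : G) :
    ∑' γ : Γ, μ ((h * γ) • O ∩ S) ≠ ⊤ := by
  have hK := (hScpt.mul hOcpt.inv).smul h⁻¹
  refine ne_top_of_le_ne_top ?_ (tsum_measure_inter_le_encard_mul
    (F := (↑) ⁻¹' (h⁻¹ • (closure S * (closure O)⁻¹))) (fun γ => measure_smul μ _ O)
    fun γ hne => ?_)
  · exact ENNReal.mul_ne_top (by simpa using
      (Subgroup.finite_preimage_coe_of_isCompact hΓ hK).encard_lt_top.ne) hO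
  · obtain ⟨s, o, ⟨hs, ho⟩, hso⟩ := smul_inter_nonempty_iff.mp hne
    rw [mem_preimage, mem_smul_set_iff_inv_smul_mem, inv_inv, smul_eq_mul, ← hso]
    exact mul_mem_mul (subset_closure hs) (inv_mem_inv.mpr (subset_closure ho))

theorem setIntegral_tsum_indicator_inv_mul_mul [BorelSpace G] [Countable Γ]
    (hΓ : DiscreteTopology Γ) (hOmeas : MeasurableSet O) (hOsym : O⁻¹ = O)
    (hOcpt : IsCompact (closure O)) (μ : Measure G) (c : ℝ) (h : G) (S : Set G) :
    ∫ g in S, ∑' γ : Γ, c * O.indicator 1 (g⁻¹ * h * γ) ∂μ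
      = c * (∑' γ : Γ, μ ((h * γ) • O ∩ S)).toReal := by
  have hind : ∀ (g : G) (γ : Γ),
      O.indicator (1 : G → ℝ) (g⁻¹ * h * γ) = ((h * γ) • O).indicator 1 g := by
    intro g γ
    have hset : (h * γ) • O = {x | x⁻¹ * (h * γ) ∈ O} :=
      ext fun x => mem_smul_set_iff_inv_mul_mem_of_inv_eq hOsym
    rw [mul_assoc, hset]
    rfl
  simp_rw [hind, tsum_mul_left, integral_const_mul]
  rw [integral_tsum_indicator_one (fun γ => hOmeas.const_smul _)
    (finite_setOf_mem_mul_smul hΓ hOsym hOcpt h)]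
  simp_rw [Measure.restrict_apply (hOmeas.const_smul _)]

end DiscreteSubgroup

theorem lattice_point_comparison_general
    {G : Type*} [Group G] [TopologicalSpace G] [IsTopologicalGroup G]
    [SecondCountableTopology G]
    [MeasurableSpace G] [BorelSpace G]
    (μ : Measure G) [μ.IsHaarMeasure]
    (Γ : Subgroup G) (hΓ : DiscreteTopology Γ)
    (O : Set G) (hOmeas : MeasurableSet O)
    (hOsym : O⁻¹ = O) (hOpos : 0 < μ O) (hOfin : μ O < ⊤)
    (hOcpt : IsCompact (closure O))
    (B : Set G) (hBcpt : IsCompact (closure B))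
    (χ φ : G → ℝ)
    (hχ : χ = fun g => (μ O).toReal⁻¹ * Set.indicator O (1 : G → ℝ) g)
    (hφ : φ = fun g => ∑' γ : Γ, χ (g * (γ : G)))
    (h : G) (hh : h ∈ O) :
    (∫ g in ⋂ u ∈ O, ⋂ v ∈ O, (fun b => u * b * v) '' B, φ (g⁻¹ * h) ∂μ)
      ≤ (Nat.card (B ∩ (Γ : Set G) : Set G) : ℝ) ∧
    (Nat.card (B ∩ (Γ : Set G) : Set G) : ℝ)
      ≤ ∫ g in O * B * O, φ (g⁻¹ * h) ∂μ := by
  have : Countable Γ := TopologicalSpace.separableSpace_iff_countable.mp inferInstance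
  have hint (S : Set G) : ∫ g in S, φ (g⁻¹ * h) ∂μ
      = ((∑' γ : Γ, μ ((h * γ) • O ∩ S)) / μ O).toReal := by
    subst hχ hφ
    rw [ENNReal.toReal_div, div_eq_inv_mul,
      ← setIntegral_tsum_indicator_inv_mul_mul hΓ hOmeas hOsym hOcpt]
  have hfin : (B ∩ Γ).Finite := (Subgroup.finite_inter_of_isCompact hΓ hBcpt).subset
    (inter_subset_inter_left _ subset_closure)
  have hcard : (Nat.card ↥(B ∩ Γ) : ℝ≥0∞) = (B ∩ Γ).encard := by
    rw [Nat.card_coe_set_eq, ← hfin.cast_ncard_eq, ENat.toENNReal_coe]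
  have hOBO : IsCompact (closure (O * B * O)) := ((hOcpt.mul hBcpt).mul hOcpt).closure_of_subset
    (mul_subset_mul (mul_subset_mul subset_closure subset_closure) subset_closure)
  rw [hint, hint, ← ENNReal.toReal_natCast, hcard]
  constructor
  · exact ENNReal.toReal_mono (by simpa using hfin.encard_lt_top.ne)
      ((ENNReal.div_le_iff hOpos.ne' hOfin.ne).mpr
        (tsum_measure_mul_smul_inter_iInter_image_le μ Γ hh))
  · exact ENNReal.toReal_mono
      (ENNReal.div_ne_top (tsum_measure_mul_smul_inter_ne_top hΓ hOcpt hOBO μ hOfin.ne h)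
        hOpos.ne')
      ((ENNReal.le_div_iff_mul_le (.inl hOpos.ne') (.inl hOfin.ne)).mpr
        (encard_inter_mul_le_tsum_measure_mul_smul_inter_mul_mul μ Γ hh))

/-- Counting lattice points: comparison lemma. For a symmetric neighbourhood `O` of
the identity, `B⁺ = O * B * O`, `B⁻ = ⋂_{u,v ∈ O} u B v`, `χ` the normalized indicator
of `O` and `φ(gΓ) = ∑_{γ ∈ Γ} χ(gγ)`, one has for every `h ∈ O`:
`∫_{B⁻} φ(g⁻¹h) dm_G(g) ≤ |B ∩ Γ| ≤ ∫_{B⁺} φ(g⁻¹h) dm_G(g)`. -/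
theorem lattice_point_comparison
    {G : Type*} [Group G] [TopologicalSpace G] [IsTopologicalGroup G]
    [LocallyCompactSpace G] [SecondCountableTopology G]
    [MeasurableSpace G] [BorelSpace G]
    (μ : Measure G) [μ.IsHaarMeasure]
    (Γ : Subgroup G) (hΓ : DiscreteTopology Γ)
    (O : Set G) (hOmeas : MeasurableSet O) (hOnhd : O ∈ nhds (1 : G))
    (hOsym : O⁻¹ = O) (hOpos : 0 < μ O) (hOfin : μ O < ⊤)
    (hOcpt : IsCompact (closure O))
    (B : Set G) (hBmeas : MeasurableSet B) (hBcpt : IsCompact (closure B))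
    (χ φ : G → ℝ)
    (hχ : χ = fun g => (μ O).toReal⁻¹ * Set.indicator O (1 : G → ℝ) g)
    (hφ : φ = fun g => ∑' γ : Γ, χ (g * (γ : G)))
    (h : G) (hh : h ∈ O) :
    (∫ g in ⋂ u ∈ O, ⋂ v ∈ O, (fun b => u * b * v) '' B, φ (g⁻¹ * h) ∂μ)
      ≤ (Nat.card (B ∩ (Γ : Set G) : Set G) : ℝ) ∧
    (Nat.card (B ∩ (Γ : Set G) : Set G) : ℝ)
      ≤ ∫ g in O * B * O, φ (g⁻¹ * h) ∂μ :=
  lattice_point_comparison_general μ Γ hΓ O hOmeas hOsym hOpos hOfin hOcpt B hBcpt χ φ hχ hφ h hh
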